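/- Let (X, φ, ℤ^d) be a minimal Cantor system and let A, B be clopen sets in X with [1_A] − [1_B] an infinitesimal element of (G(φ), G(φ)_+). Then given any proper clopen subset D ⊊ A and any point b ∈ B, there exists a clopen subset E ⊆ B \ {b} with [1_D] < [1_E] in G(φ). -/

import Mathlib

open Filter Topology


/-- The subgroup `B(φ) ⊆ C(X, ℤ)` of `φ`-coboundaries, generated by the functions
`g - g ∘ φ^v` (equivalently by `1_A - 1_{φ^v A}` for clopen `A`). -/
def cobSubgroup {d : ℕ} {X : Type*} [TopologicalSpace X]
    (φ : (Fin d → ℤ) → X ≃ₜ X) : AddSubgroup C(X, ℤ) :=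
  AddSubgroup.closure
    {f | ∃ (g : C(X, ℤ)) (v : Fin d → ℤ), f = g - g.comp ⟨⇑(φ v), (φ v).continuous⟩}

/-- The positive cone `G(φ)₊` of the dynamical cohomology group
`G(φ) = C(X, ℤ) / B(φ)`: classes of pointwise nonnegative functions. -/
def posCone {d : ℕ} {X : Type*} [TopologicalSpace X] (φ : (Fin d → ℤ) → X ≃ₜ X) :
    Set (C(X, ℤ) ⧸ cobSubgroup φ) :=
  {a | ∃ f : C(X, ℤ), (∀ x, 0 ≤ f x) ∧
    (QuotientAddGroup.mk f : C(X, ℤ) ⧸ cobSubgroup φ) = a}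

/-- indicator of a clopen set as a continuous integer-valued map -/
noncomputable def indC {X : Type*} [TopologicalSpace X] (S : Set X) (hS : IsClopen S) :
    C(X, ℤ) :=
  ⟨S.indicator 1, by
    classical
    have h : S.indicator (1 : X → ℤ) = fun x => if x ∈ S then (1:ℤ) else 0 := by
      funext x; simp [Set.indicator_apply]
    rw [h]
    exact continuous_const.if (by simp [hS.frontier_eq]) continuous_const⟩

lemma indC_apply {X : Type*} [TopologicalSpace X] (S : Set X) (hS : IsClopen S) (x : X) :
    indC S hS x = S.indicator 1 x := rfl

lemma indC_nonneg {X : Type*} [TopologicalSpace X] (S : Set X) (hS : IsClopen S) (x : X) :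
    0 ≤ indC S hS x := Set.indicator_apply_nonneg (fun _ => zero_le_one)

/-- box `[a, b)^d` in `ℤ^d` -/
noncomputable def boxI (d : ℕ) (a b : ℤ) : Finset (Fin d → ℤ) :=
  Fintype.piFinset fun _ => Finset.Ico a b

lemma mem_boxI {d : ℕ} {a b : ℤ} {v : Fin d → ℤ} :
    v ∈ boxI d a b ↔ ∀ i, a ≤ v i ∧ v i < b := by
  simp [boxI, Fintype.mem_piFinset, Finset.mem_Ico]

lemma boxI_card (d : ℕ) (a b : ℤ) : (boxI d a b).card = (b - a).toNat ^ d := by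
  simp [boxI, Fintype.card_piFinset]

lemma ratio_tendsto (d K : ℕ) :
    Tendsto (fun n : ℕ => (((((n:ℤ) - 2*K).toNat : ℕ) : ℝ)/n)^d) atTop (𝓝 1) := by
  have h1 : Tendsto (fun n : ℕ => ((n:ℝ) - 2*K)/n) atTop (𝓝 1) := by
    have h0 : Tendsto (fun n:ℕ => 1 - (2*K:ℝ) * (1/(n:ℝ))) atTop (𝓝 (1 - (2*K:ℝ) * 0)) :=
      tendsto_const_nhds.sub (tendsto_const_nhds.mul tendsto_one_div_atTop_nhds_zero_nat)
    rw [mul_zero, sub_zero] at h0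
    refine h0.congr' ?_
    filter_upwards [eventually_ge_atTop 1] with n hn
    have : (n:ℝ) ≠ 0 := by positivity
    field_simp
  have h2 : Tendsto (fun n : ℕ => (((n:ℝ) - 2*K)/n)^d) atTop (𝓝 1) := by
    simpa using h1.pow d
  refine h2.congr' ?_
  filter_upwards [eventually_ge_atTop (2*K)] with n hn
  congr 2
  have hnn : (0:ℤ) ≤ (n:ℤ) - 2*K := by
    have : (2*K : ℤ) ≤ (n:ℤ) := by exact_mod_cast hn
    omega
  have : (((((n:ℤ) - 2*K).toNat : ℕ)) : ℝ) = ((((n:ℤ) - 2*K) : ℤ) : ℝ) := by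
    exact_mod_cast congrArg (fun z : ℤ => (z:ℝ)) (Int.toNat_of_nonneg hnn)
  rw [this]
  push_cast
  ring

/-- the error-count sequence -/
def cn (d K : ℕ) (n : ℕ) : ℕ := n ^ d - ((n:ℤ) - 2*K).toNat ^ d

lemma cn_tendsto (d K : ℕ) :
    Tendsto (fun n : ℕ => ((cn d K n : ℝ))/(n:ℝ)^d) atTop (𝓝 0) := by
  have h2 := ratio_tendsto d K
  have h3 : Tendsto (fun n : ℕ => 1 - (((((n:ℤ) - 2*K).toNat : ℕ) : ℝ)/n)^d) atTop (𝓝 (1-1)) :=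
    tendsto_const_nhds.sub h2
  rw [sub_self] at h3
  refine h3.congr' ?_
  filter_upwards [eventually_ge_atTop 1] with n hn
  have hmn : ((n:ℤ) - 2*K).toNat ≤ n := by omega
  have hle : ((n:ℤ) - 2*K).toNat ^ d ≤ n ^ d := Nat.pow_le_pow_left hmn d
  have hcast : ((cn d K n : ℕ) : ℝ) = (n:ℝ)^d - ((((n:ℤ) - 2*K).toNat : ℕ) : ℝ)^d := by
    unfold cn
    push_cast [Nat.cast_sub hle]
    ring
  have hn0 : ((n:ℝ))^d ≠ 0 := by positivity
  rw [hcast, div_pow, sub_div, div_self hn0]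

theorem sum_box_tendsto {d : ℕ} {X : Type*} [TopologicalSpace X] [CompactSpace X]
    (φ : (Fin d → ℤ) → X ≃ₜ X) (hφadd : ∀ v w x, φ (v + w) x = φ v (φ w x))
    {f : C(X, ℤ)} (hf : f ∈ cobSubgroup φ) (x : X) :
    Tendsto (fun n : ℕ => ((∑ v ∈ boxI d 0 n, f (φ v x) : ℤ) : ℝ) / (n : ℝ) ^ d)
      atTop (𝓝 0) := by
  induction hf using AddSubgroup.closure_induction with
  | mem g hg =>
    obtain ⟨g, w, rfl⟩ := hg
    -- bound on g
    have hrange : (Set.range fun y => |g y|).Finite := by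
      have hc : Continuous fun y : X => |g y| :=
        (continuous_of_discreteTopology (f := fun m : ℤ => |m|)).comp g.continuous
      exact (isCompact_range hc).finite_of_discrete
    obtain ⟨M, hM⟩ := hrange.bddAbove
    have hM' : ∀ y, |g y| ≤ M := fun y => hM (Set.mem_range_self y)
    have hM0 : 0 ≤ M := le_trans (abs_nonneg _) (hM' x)
    -- bound on w
    set K : ℕ := Finset.univ.sup fun i => (w i).natAbs with hK
    have hKw : ∀ i, |w i| ≤ (K : ℤ) := by
      intro i
      have h := Finset.le_sup (f := fun i => (w i).natAbs) (Finset.mem_univ i)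
      rw [Int.abs_eq_natAbs]
      exact_mod_cast h
    set F : (Fin d → ℤ) → ℤ := fun u => g (φ u x) with hF
    -- the partial sums
    have hsum : ∀ n : ℕ,
        ∑ v ∈ boxI d 0 n, (g - g.comp ⟨⇑(φ w), (φ w).continuous⟩) (φ v x)
          = ∑ v ∈ boxI d 0 n, F v - ∑ u ∈ (boxI d 0 n).image (w + ·), F u := by
      intro n
      have inj : Function.Injective (w + ·) := fun a b h => by
        simpa using add_right_injective w h
      rw [Finset.sum_image (fun a _ b _ h => inj h)]
      rw [← Finset.sum_sub_distrib]
      refine Finset.sum_congr rfl fun v _ => ?_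
      have : φ w (φ v x) = φ (w + v) x := (hφadd w v x).symm
      simp [ContinuousMap.sub_apply, ContinuousMap.comp_apply, this, hF]
    -- the key cardinality bound
    have hbound : ∀ n : ℕ,
        |∑ v ∈ boxI d 0 n, (g - g.comp ⟨⇑(φ w), (φ w).continuous⟩) (φ v x)|
          ≤ 2 * M * (cn d K n) := by
      intro n
      set s := boxI d 0 n with hs
      set t := s.image (w + ·) with ht
      have inj : Function.Injective (w + ·) := fun a b h => by
        simpa using add_right_injective w h
      have hts : t.card = s.card := Finset.card_image_of_injective _ inj
      -- inner box inside s ∩ t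
      have hinner : boxI d (K : ℤ) ((n : ℤ) - K) ⊆ s ∩ t := by
        intro u hu
        rw [mem_boxI] at hu
        rw [Finset.mem_inter]
        constructor
        · rw [hs, mem_boxI]
          intro i
          have := hu i
          have := abs_le.mp (hKw i)
          omega
        · rw [ht, Finset.mem_image]
          refine ⟨u - w, ?_, by simp⟩
          rw [mem_boxI]
          intro i
          have := hu i
          have := abs_le.mp (hKw i)
          simp only [Pi.sub_apply]
          omega
      have hcards : (s ∩ t).card ≥ ((n:ℤ) - 2*K).toNat ^ d := by
        calc ((n:ℤ) - 2*K).toNat ^ d = (boxI d (K : ℤ) ((n : ℤ) - K)).card := by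
              rw [boxI_card]; congr 2; ring
          _ ≤ (s ∩ t).card := Finset.card_le_card hinner
      have hscard : s.card = n ^ d := by
        rw [hs, boxI_card]; simp
      have hdiff1 : (s \ t).card ≤ cn d K n := by
        rw [← Finset.sdiff_inter_self_left s t, Finset.card_sdiff_of_subset Finset.inter_subset_left]
        unfold cn
        omega
      have hdiff2 : (t \ s).card ≤ cn d K n := by
        rw [← Finset.sdiff_inter_self_left t s, Finset.card_sdiff_of_subset Finset.inter_subset_left,
          Finset.inter_comm]
        unfold cn
        omega
      rw [hsum n]
      have hsplit : ∑ v ∈ s, F v - ∑ u ∈ t, F u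
          = ∑ v ∈ s \ t, F v - ∑ u ∈ t \ s, F u := by
        rw [← Finset.sum_inter_add_sum_sdiff s t F, ← Finset.sum_inter_add_sum_sdiff t s F,
          Finset.inter_comm]
        ring
      rw [hsplit]
      have h1 : |∑ v ∈ s \ t, F v| ≤ M * (s \ t).card := by
        calc |∑ v ∈ s \ t, F v| ≤ ∑ v ∈ s \ t, |F v| := Finset.abs_sum_le_sum_abs _ _
          _ ≤ ∑ _v ∈ s \ t, M := Finset.sum_le_sum fun v _ => hM' _
          _ = M * (s \ t).card := by rw [Finset.sum_const]; push_cast; ring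
      have h2 : |∑ u ∈ t \ s, F u| ≤ M * (t \ s).card := by
        calc |∑ v ∈ t \ s, F v| ≤ ∑ v ∈ t \ s, |F v| := Finset.abs_sum_le_sum_abs _ _
          _ ≤ ∑ _v ∈ t \ s, M := Finset.sum_le_sum fun v _ => hM' _
          _ = M * (t \ s).card := by rw [Finset.sum_const]; push_cast; ring
      calc |∑ v ∈ s \ t, F v - ∑ u ∈ t \ s, F u|
          ≤ |∑ v ∈ s \ t, F v| + |∑ u ∈ t \ s, F u| := abs_sub _ _
        _ ≤ M * (s \ t).card + M * (t \ s).card := add_le_add h1 h2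
        _ ≤ 2 * M * (cn d K n) := by
            have c1 : ((s \ t).card : ℤ) ≤ (cn d K n : ℤ) := by exact_mod_cast hdiff1
            have c2 : ((t \ s).card : ℤ) ≤ (cn d K n : ℤ) := by exact_mod_cast hdiff2
            nlinarith [hM0]
    -- squeeze
    have htend : Tendsto (fun n : ℕ => (2*M : ℝ) * ((cn d K n : ℝ)/(n:ℝ)^d)) atTop
        (𝓝 ((2*M:ℝ) * 0)) := tendsto_const_nhds.mul (cn_tendsto d K)
    rw [mul_zero] at htend
    refine squeeze_zero_norm (a := fun n : ℕ => (2*M:ℝ) * ((cn d K n : ℝ)/(n:ℝ)^d))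
      (fun n => ?_) htend
    have hcast : (|(∑ v ∈ boxI d 0 (n:ℤ), (g - g.comp ⟨⇑(φ w), (φ w).continuous⟩) (φ v x) : ℤ)| : ℝ)
        ≤ ((2 * M * (cn d K n) : ℤ) : ℝ) := by exact_mod_cast hbound n
    show _ ≤ (2*M:ℝ) * ((cn d K n : ℝ)/(n:ℝ)^d)
    rw [Real.norm_eq_abs, abs_div, abs_pow, Nat.abs_cast, mul_div_assoc']
    rcases Nat.eq_zero_or_pos (n ^ d) with h0 | hpos
    · have : ((n:ℝ))^d = 0 := by
        rw [show ((n:ℝ))^d = ((n^d : ℕ) : ℝ) by push_cast; ring, h0]; simp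
      simp [this]
    · have hpos' : (0:ℝ) < (n:ℝ)^d := by
        rw [show ((n:ℝ))^d = ((n^d : ℕ) : ℝ) by push_cast; ring]
        exact_mod_cast hpos
      rw [div_le_div_iff_of_pos_right hpos'] -- name guess
      rw [← Int.cast_abs]
      push_cast at hcast ⊢
      linarith
  | zero =>
    simpa using (tendsto_const_nhds : Tendsto (fun _ : ℕ => (0:ℝ)) atTop (𝓝 0))
  | add g h _ _ hg hh =>
    have := hg.add hh
    rw [add_zero] at this
    refine this.congr fun n => ?_
    rw [← add_div, ← Int.cast_add, ← Finset.sum_add_distrib]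
    norm_num [ContinuousMap.add_apply]
  | neg g _ hg =>
    have := hg.neg
    rw [neg_zero] at this
    refine this.congr fun n => ?_
    rw [← neg_div, ← Int.cast_neg, ← Finset.sum_neg_distrib]
    norm_num [ContinuousMap.neg_apply]

theorem eq_zero_of_nonneg_mem_cob {d : ℕ} {X : Type*} [TopologicalSpace X] [CompactSpace X]
    (φ : (Fin d → ℤ) → X ≃ₜ X) (hφadd : ∀ v w x, φ (v + w) x = φ v (φ w x))
    (hφmin : ∀ x : X, Dense {y | ∃ v, φ v x = y})
    {f : C(X, ℤ)} (h0 : ∀ x, 0 ≤ f x) (hf : f ∈ cobSubgroup φ) : f = 0 := by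
  by_contra hne
  -- there is a point where f ≥ 1
  have hz : ∃ z, f z ≠ 0 := by
    by_contra h
    push_neg at h
    exact hne (ContinuousMap.ext fun x => by simp [h x])
  obtain ⟨z, hzne⟩ := hz
  classical
  set U : Set X := {y | f y ≠ 0} with hU
  have hUopen : IsOpen U := by
    have : U = f ⁻¹' {m | m ≠ 0} := rfl
    rw [this]
    exact (isOpen_discrete _).preimage f.continuous
  have hUne : U.Nonempty := ⟨z, hzne⟩
  -- syndeticity of visits to U
  have hcover : (Set.univ : Set X) ⊆ ⋃ v : Fin d → ℤ, (fun x => φ v x) ⁻¹' U := by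
    intro x _
    obtain ⟨y, ⟨v, hvy⟩, hyU⟩ := (hφmin x).exists_mem_open hUopen hUne
    exact Set.mem_iUnion.mpr ⟨v, by simpa [hvy] using hyU⟩
  obtain ⟨T, hT⟩ := isCompact_univ.elim_finite_subcover
    (fun v : Fin d → ℤ => (fun x => φ v x) ⁻¹' U)
    (fun v => hUopen.preimage (φ v).continuous) hcover
  have hTx : ∀ x : X, ∃ t ∈ T, f (φ t x) ≠ 0 := by
    intro x
    obtain ⟨t, ht, hx⟩ := Set.mem_iUnion₂.mp (hT (Set.mem_univ x))
    exact ⟨t, ht, hx⟩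
  have hTne : T.Nonempty := by
    obtain ⟨t, ht, _⟩ := hTx z
    exact ⟨t, ht⟩
  -- uniform bound on T
  obtain ⟨K, hKT⟩ : ∃ K : ℕ, ∀ t ∈ T, ∀ i, |t i| ≤ (K:ℤ) := by
    refine ⟨T.sup fun t => Finset.univ.sup fun i => (t i).natAbs, fun t ht i => ?_⟩
    have h1 : (t i).natAbs ≤ Finset.univ.sup fun i => (t i).natAbs :=
      Finset.le_sup (f := fun i => (t i).natAbs) (Finset.mem_univ i)
    have h2 : (Finset.univ.sup fun i => (t i).natAbs)
        ≤ T.sup fun t => Finset.univ.sup fun i => (t i).natAbs :=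
      Finset.le_sup (f := fun t => Finset.univ.sup fun i => (t i).natAbs) ht
    rw [Int.abs_eq_natAbs]
    exact_mod_cast le_trans h1 h2
  -- base point shifted by -K
  set x' : X := φ (fun _ => -(K:ℤ)) z with hx'
  have key := sum_box_tendsto φ hφadd hf x'
  -- lower bound for the sums
  have hlow : ∀ n : ℕ, 2*K ≤ n →
      ((n - 2*K : ℕ) ^ d : ℤ) ≤ T.card * ∑ v ∈ boxI d 0 n, f (φ v x') := by
    intro n hn
    -- rewrite the sum over boxI d 0 n at x' as a sum over boxI d (-K) (n - K) at z
    have hshift : ∑ v ∈ boxI d 0 n, f (φ v x')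
        = ∑ u ∈ boxI d (-(K:ℤ)) ((n:ℤ) - K), f (φ u z) := by
      refine Finset.sum_nbij' (fun v => v - fun _ => (K:ℤ)) (fun u => u + fun _ => (K:ℤ))
        ?_ ?_ (fun v _ => by funext i; simp) (fun u _ => by funext i; simp) ?_
      · intro v hv
        rw [mem_boxI] at hv ⊢
        intro i
        have := hv i
        simp only [Pi.sub_apply]
        omega
      · intro u hu
        rw [mem_boxI] at hu ⊢
        intro i
        have := hu i
        simp only [Pi.add_apply]
        omega
      · intro v _
        have hvk : v - (fun _ => (K:ℤ)) = v + fun _ => -(K:ℤ) := by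
          funext i; simp [sub_eq_add_neg]
        show f (φ v x') = f (φ (v - fun _ => (K:ℤ)) z)
        rw [hvk, hx', ← hφadd]
    rw [hshift]
    -- visits set
    set big := boxI d (-(K:ℤ)) ((n:ℤ) - K) with hbig
    set V := big.filter (fun u => f (φ u z) ≠ 0) with hV
    -- each v in the inner box gives a visit
    have hmap : ∀ v ∈ boxI d 0 ((n:ℤ) - 2*K), ∃ t ∈ T, (v + t ∈ V) := by
      intro v hv
      obtain ⟨t, ht, hft⟩ := hTx (φ v z)
      refine ⟨t, ht, ?_⟩
      rw [hV, Finset.mem_filter]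
      have hmem : v + t ∈ big := by
        rw [hbig, mem_boxI]
        intro i
        rw [mem_boxI] at hv
        have := hv i
        have := abs_le.mp (hKT t ht i)
        simp only [Pi.add_apply]
        omega
      refine ⟨hmem, ?_⟩
      have : φ (v + t) z = φ v (φ t z) := hφadd v t z
      have h2 : φ t (φ v z) = φ (t + v) z := (hφadd t v z).symm
      rw [show v + t = t + v from add_comm v t, ← h2]
      exact hft
    -- injective map into V ×ˢ T
    choose tf htfT htfV using hmap
    have hcard : (boxI d 0 ((n:ℤ) - 2*K)).card ≤ V.card * T.card := by
      have : (boxI d 0 ((n:ℤ) - 2*K)).card ≤ (V ×ˢ T).card := by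
        rw [← Finset.card_attach (s := boxI d 0 ((n:ℤ) - 2*K))]
        refine Finset.card_le_card_of_injOn
          (fun v => ((v : Fin d → ℤ) + tf v v.2, tf v v.2)) ?_ ?_
        · intro v _
          rw [Finset.mem_coe, Finset.mem_product]
          exact ⟨htfV v v.2, htfT v v.2⟩
        · intro v _ u _ h
          have h1 := congrArg Prod.snd h
          have h2 := congrArg Prod.fst h
          simp only at h1 h2
          rw [h1] at h2
          have := add_right_cancel h2
          exact Subtype.ext this
      rwa [Finset.card_product] at this
    have hVsum : (V.card : ℤ) ≤ ∑ u ∈ big, f (φ u z) := by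
      have h1 : ∑ u ∈ V, (1:ℤ) ≤ ∑ u ∈ V, f (φ u z) := by
        refine Finset.sum_le_sum fun u hu => ?_
        rw [hV, Finset.mem_filter] at hu
        have := h0 (φ u z)
        omega
      have h2 : ∑ u ∈ V, f (φ u z) ≤ ∑ u ∈ big, f (φ u z) := by
        refine Finset.sum_le_sum_of_subset_of_nonneg (Finset.filter_subset _ _)
          fun u _ _ => h0 _
      simpa using le_trans h1 h2
    have hboxcard : (boxI d 0 ((n:ℤ) - 2*K)).card = (n - 2*K : ℕ) ^ d := by
      rw [boxI_card]
      congr 1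
      omega
    calc ((n - 2*K : ℕ) ^ d : ℤ) = ((boxI d 0 ((n:ℤ) - 2*K)).card : ℤ) := by
          rw [hboxcard]; push_cast; ring
      _ ≤ (V.card : ℤ) * T.card := by exact_mod_cast hcard
      _ ≤ T.card * ∑ u ∈ big, f (φ u z) := by
          have hc : (0:ℤ) ≤ T.card := by positivity
          calc (V.card : ℤ) * T.card = (T.card : ℤ) * V.card := by ring
            _ ≤ T.card * ∑ u ∈ big, f (φ u z) := by
                exact mul_le_mul_of_nonneg_left hVsum hc
  -- derive contradiction with the limit
  have hTpos : (0:ℝ) < T.card := by exact_mod_cast Finset.card_pos.mpr hTne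
  have hlowR : ∀ᶠ n in atTop, (((n - 2*K : ℕ):ℝ)/n)^d / T.card
      ≤ (((∑ v ∈ boxI d 0 (n:ℤ), f (φ v x') : ℤ)):ℝ) / (n:ℝ)^d := by
    filter_upwards [eventually_ge_atTop (2*K+1)] with n hn
    have h1 := hlow n (by omega)
    have h1R : (((n - 2*K : ℕ) ^ d : ℕ) : ℝ)
        ≤ (T.card : ℝ) * (((∑ v ∈ boxI d 0 (n:ℤ), f (φ v x') : ℤ)):ℝ) := by
      exact_mod_cast h1
    have hn0 : (0:ℝ) < (n:ℝ) := by exact_mod_cast (by omega : 0 < n)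
    have hnpos : (0:ℝ) < (n:ℝ)^d := by positivity
    rw [div_pow, div_div, div_le_div_iff₀ (by positivity) hnpos]
    push_cast at h1R ⊢
    nlinarith [hnpos, hTpos]
  -- the lower bounds tend to 1 / T.card
  have hlim2 : Tendsto (fun n : ℕ => (((n - 2*K : ℕ):ℝ)/n)^d / T.card) atTop
      (𝓝 (1 / T.card)) := by
    have h2 : Tendsto (fun n : ℕ => (((n - 2*K : ℕ):ℝ)/n)^d) atTop (𝓝 1) := by
      have := ratio_tendsto d K
      refine this.congr' ?_
      filter_upwards [eventually_ge_atTop (2*K)] with n hn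
      congr 3
      omega
    simpa using h2.div_const (T.card : ℝ)
  have : (1:ℝ) / T.card ≤ 0 := le_of_tendsto_of_tendsto hlim2 key hlowR
  have : (0:ℝ) < 1 / T.card := by positivity
  linarith

lemma mk_ind_ne_zero {d : ℕ} {X : Type*} [TopologicalSpace X] [CompactSpace X]
    (φ : (Fin d → ℤ) → X ≃ₜ X) (hφadd : ∀ v w x, φ (v + w) x = φ v (φ w x))
    (hφmin : ∀ x : X, Dense {y | ∃ v, φ v x = y})
    {S : Set X} (hS : IsClopen S) (hne : S.Nonempty) :
    (QuotientAddGroup.mk (indC S hS) : C(X, ℤ) ⧸ cobSubgroup φ) ≠ 0 := by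
  obtain ⟨s, hs⟩ := hne
  intro h
  rw [QuotientAddGroup.eq_zero_iff] at h
  have h0 := eq_zero_of_nonneg_mem_cob φ hφadd hφmin (indC_nonneg S hS) h
  have h1 := congrArg (fun g : C(X,ℤ) => g s) h0
  simp [indC_apply, Set.indicator_of_mem hs] at h1

/-- Let `(X, φ, ℤ^d)` be a minimal Cantor system and `A`, `B` clopen sets
with `[1_A] − [1_B]` infinitesimal in `(G(φ), G(φ)₊)`. Then for any proper clopen subset
`D ⊊ A` and any point `b ∈ B`, there exists a clopen `E ⊆ B \ {b}` with `[1_D] < [1_E]`. -/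
theorem stmt_19 {d : ℕ} {X : Type*} [TopologicalSpace X] [CompactSpace X] [T2Space X]
    [TotallyDisconnectedSpace X] (hXp : Perfect (Set.univ : Set X))
    (φ : (Fin d → ℤ) → X ≃ₜ X)
    (hφadd : ∀ v w x, φ (v + w) x = φ v (φ w x))
    (hφmin : ∀ x : X, Dense {y | ∃ v, φ v x = y})
    (hφfree : ∀ (v) (x : X), φ v x = x → v = 0)
    (A B : Set X) (hA : IsClopen A) (hB : IsClopen B)
    (fA fB : C(X, ℤ))
    (hfA : ∀ x, fA x = Set.indicator A 1 x) (hfB : ∀ x, fB x = Set.indicator B 1 x)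
    -- `[1_A] − [1_B]` is infinitesimal: `n·([1_A] − [1_B]) < h` for all `n ∈ ℤ` and
    -- all `h ∈ G(φ)₊ \ {0}`
    (hinf : ∀ (n : ℤ) (h : C(X, ℤ) ⧸ cobSubgroup φ), h ∈ posCone φ → h ≠ 0 →
      h - n • ((QuotientAddGroup.mk fA : C(X, ℤ) ⧸ cobSubgroup φ) -
        QuotientAddGroup.mk fB) ∈ posCone φ ∧
      h ≠ n • ((QuotientAddGroup.mk fA : C(X, ℤ) ⧸ cobSubgroup φ) -
        QuotientAddGroup.mk fB))
    (D : Set X) (hD : IsClopen D) (hDA : D ⊆ A) (hDne : D ≠ A) (b : X) (hb : b ∈ B) :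
    ∃ E : Set X, IsClopen E ∧ E ⊆ B \ {b} ∧
      ∀ fD fE : C(X, ℤ),
        (∀ x, fD x = Set.indicator D 1 x) → (∀ x, fE x = Set.indicator E 1 x) →
        (QuotientAddGroup.mk fE : C(X, ℤ) ⧸ cobSubgroup φ) -
            QuotientAddGroup.mk fD ∈ posCone φ ∧
          (QuotientAddGroup.mk fE : C(X, ℤ) ⧸ cobSubgroup φ) ≠
            QuotientAddGroup.mk fD := by
  classical
  -- the set A \ D
  have hADclopen : IsClopen (A \ D) := hA.diff hD
  have hADne : (A \ D).Nonempty := by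
    rw [Set.nonempty_iff_ne_empty]
    intro h
    exact hDne (Set.Subset.antisymm hDA (Set.diff_eq_empty.mp h))
  -- apply the infinitesimal hypothesis with n = 1
  set iD : C(X, ℤ) := indC D hD with hiD
  have e1 : indC (A \ D) hADclopen = fA - iD := by
    ext x
    by_cases hxD : x ∈ D
    · have hxA : x ∈ A := hDA hxD
      simp [indC_apply, ContinuousMap.sub_apply, hfA x, hiD,
        Set.indicator_apply, hxD, hxA, Set.mem_diff]
    · by_cases hxA : x ∈ A
      · simp [indC_apply, ContinuousMap.sub_apply, hfA x, hiD,
          Set.indicator_apply, hxD, hxA, Set.mem_diff]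
      · simp [indC_apply, ContinuousMap.sub_apply, hfA x, hiD,
          Set.indicator_apply, hxD, hxA, Set.mem_diff]
  obtain ⟨hp1, hp2⟩ := hinf 1
    (QuotientAddGroup.mk (indC (A \ D) hADclopen))
    ⟨indC (A \ D) hADclopen, indC_nonneg _ _, rfl⟩
    (mk_ind_ne_zero φ hφadd hφmin hADclopen hADne)
  rw [one_smul] at hp1 hp2
  obtain ⟨f, hf0, hfeq⟩ := hp1
  -- the class of f is [1_B] - [1_D]
  have hp : (QuotientAddGroup.mk f : C(X, ℤ) ⧸ cobSubgroup φ)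
      = QuotientAddGroup.mk fB - QuotientAddGroup.mk iD := by
    rw [hfeq, e1]
    have : (QuotientAddGroup.mk (fA - iD) : C(X, ℤ) ⧸ cobSubgroup φ)
        = QuotientAddGroup.mk fA - QuotientAddGroup.mk iD := rfl
    rw [this]
    abel
  have hpne : (QuotientAddGroup.mk f : C(X, ℤ) ⧸ cobSubgroup φ) ≠ 0 := by
    rw [hp]
    intro h
    apply hp2
    rw [e1]
    have e2 : (QuotientAddGroup.mk (fA - iD) : C(X, ℤ) ⧸ cobSubgroup φ)
        = QuotientAddGroup.mk fA - QuotientAddGroup.mk iD := rfl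
    rw [e2]
    have : QuotientAddGroup.mk fB = (QuotientAddGroup.mk iD : C(X, ℤ) ⧸ cobSubgroup φ) :=
      sub_eq_zero.mp h
    rw [this]
  -- f is somewhere nonzero
  have hfnz : ∃ z, f z ≠ 0 := by
    by_contra h
    push_neg at h
    exact hpne (by
      have : f = 0 := ContinuousMap.ext fun x => by simp [h x]
      rw [this]
      rfl)
  obtain ⟨w, hwW⟩ := hfnz
  set W : Set X := {y | f y ≠ 0} with hW
  have hWclopen : IsClopen W := (isClopen_discrete {m : ℤ | m ≠ 0}).preimage f.continuous
  -- a second point of W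
  obtain ⟨w', hw'W, hww'⟩ : ∃ w', w' ∈ W ∧ w' ≠ w := by
    have h := hXp.acc w (Set.mem_univ w)
    rw [accPt_iff_nhds] at h
    obtain ⟨y, ⟨hyW, _⟩, hy⟩ := h W (hWclopen.isOpen.mem_nhds hwW)
    exact ⟨y, hyW, hy⟩
  -- separate w from w'
  have : TotallySeparatedSpace X := loc_compact_t2_tot_disc_iff_tot_sep.mp ‹_›
  obtain ⟨U₀, hU₀, hwU₀, hw'U₀⟩ := exists_isClopen_of_totally_separated (i := w) (j := w')
    (Ne.symm hww')
  set W' : Set X := W ∩ U₀ with hW'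
  have hW'clopen : IsClopen W' := hWclopen.inter hU₀
  have hwW' : w ∈ W' := ⟨hwW, hwU₀⟩
  have hw'WW' : w' ∈ W \ W' := ⟨hw'W, fun h => hw'U₀ h.2⟩
  -- bring b into W' by minimality
  obtain ⟨y, ⟨v, hvy⟩, hyW'⟩ := (hφmin b).exists_mem_open hW'clopen.isOpen ⟨w, hwW'⟩
  set V : Set X := (φ v) ⁻¹' W' with hV
  have hVclopen : IsClopen V := hW'clopen.preimage (φ v).continuous
  have hbV : b ∈ V := by
    rw [hV, Set.mem_preimage, hvy]
    exact hyW'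
  -- [1_{W'}] = [1_V]
  have hWV : (QuotientAddGroup.mk (indC W' hW'clopen) : C(X, ℤ) ⧸ cobSubgroup φ)
      = QuotientAddGroup.mk (indC V hVclopen) := by
    rw [QuotientAddGroup.eq_iff_sub_mem]
    have hcomp : (indC W' hW'clopen).comp ⟨⇑(φ v), (φ v).continuous⟩ = indC V hVclopen := by
      ext x
      simp [ContinuousMap.comp_apply, indC_apply, Set.indicator_apply, hV, Set.mem_preimage]
    rw [← hcomp]
    exact AddSubgroup.subset_closure ⟨indC W' hW'clopen, v, rfl⟩
  -- the set E
  refine ⟨B \ V, hB.diff hVclopen, fun x hx => ⟨hx.1, fun h => hx.2 (h ▸ hbV)⟩, ?_⟩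
  intro fD fE hfD hfE
  set hEclopen : IsClopen (B \ V) := hB.diff hVclopen
  have hfDeq : fD = iD := ContinuousMap.ext fun x => by rw [hfD x]; rfl
  have hfEeq : fE = indC (B \ V) hEclopen := ContinuousMap.ext fun x => by rw [hfE x]; rfl
  -- the nonnegative function g
  set g : C(X, ℤ) := (f - indC W hWclopen) + indC (W \ W') (hWclopen.diff hW'clopen)
      + indC (V \ B) (hVclopen.diff hB) with hg
  have hg0 : ∀ x, 0 ≤ g x := by
    intro x
    have h1 : 0 ≤ f x - indC W hWclopen x := by
      by_cases hx : x ∈ W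
      · have : f x ≠ 0 := hx
        have := hf0 x
        simp [indC_apply, Set.indicator_of_mem hx]
        omega
      · have : f x = 0 := by simpa [hW] using hx
        simp [indC_apply, Set.indicator_of_notMem hx, this]
    have h2 := indC_nonneg (W \ W') (hWclopen.diff hW'clopen) x
    have h3 := indC_nonneg (V \ B) (hVclopen.diff hB) x
    simp only [hg, ContinuousMap.add_apply, ContinuousMap.sub_apply]
    omega
  -- pointwise identities
  have hI1 : indC (B \ V) hEclopen = fB - indC (B ∩ V) (hB.inter hVclopen) := by
    ext x
    by_cases hxB : x ∈ B <;> by_cases hxV : x ∈ V <;>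
      simp [indC_apply, ContinuousMap.sub_apply, hfB x, Set.indicator_apply,
        hxB, hxV, Set.mem_diff, Set.mem_inter_iff]
  have hI1' : indC V hVclopen = indC (B ∩ V) (hB.inter hVclopen)
      + indC (V \ B) (hVclopen.diff hB) := by
    ext x
    by_cases hxB : x ∈ B <;> by_cases hxV : x ∈ V <;>
      simp [indC_apply, ContinuousMap.add_apply, Set.indicator_apply,
        hxB, hxV, Set.mem_diff, Set.mem_inter_iff]
  have hI2 : indC W hWclopen = indC W' hW'clopen + indC (W \ W') (hWclopen.diff hW'clopen) := by
    ext x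
    by_cases hxW' : x ∈ W'
    · have hxW : x ∈ W := hxW'.1
      have hnd : x ∉ W \ W' := fun h => h.2 hxW'
      simp [indC_apply, ContinuousMap.add_apply, Set.indicator_of_mem,
        Set.indicator_of_notMem, hxW, hxW', hnd]
    · by_cases hxW : x ∈ W
      · have hd : x ∈ W \ W' := ⟨hxW, hxW'⟩
        simp [indC_apply, ContinuousMap.add_apply, Set.indicator_of_mem,
          Set.indicator_of_notMem, hxW, hxW', hd]
      · have hnd : x ∉ W \ W' := fun h => hxW h.1
        simp [indC_apply, ContinuousMap.add_apply, Set.indicator_of_mem,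
          Set.indicator_of_notMem, hxW, hxW', hnd]
  -- class computation: [1_E] - [1_D] = [g]
  have hclass : (QuotientAddGroup.mk fE : C(X, ℤ) ⧸ cobSubgroup φ) - QuotientAddGroup.mk fD
      = QuotientAddGroup.mk g := by
    rw [hfDeq, hfEeq]
    have q0 : ∀ a c : C(X, ℤ), (QuotientAddGroup.mk (a - c) : C(X, ℤ) ⧸ cobSubgroup φ)
        = QuotientAddGroup.mk a - QuotientAddGroup.mk c := fun _ _ => rfl
    have q0' : ∀ a c : C(X, ℤ), (QuotientAddGroup.mk (a + c) : C(X, ℤ) ⧸ cobSubgroup φ)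
        = QuotientAddGroup.mk a + QuotientAddGroup.mk c := fun _ _ => rfl
    rw [hI1, hg]
    rw [q0, q0', q0', q0]
    have hBV : (QuotientAddGroup.mk (indC (B ∩ V) (hB.inter hVclopen))
        : C(X, ℤ) ⧸ cobSubgroup φ)
        = QuotientAddGroup.mk (indC V hVclopen)
          - QuotientAddGroup.mk (indC (V \ B) (hVclopen.diff hB)) := by
      rw [eq_sub_iff_add_eq, ← q0', ← hI1']
    have hWq : (QuotientAddGroup.mk (indC W hWclopen) : C(X, ℤ) ⧸ cobSubgroup φ)
        = QuotientAddGroup.mk (indC W' hW'clopen)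
          + QuotientAddGroup.mk (indC (W \ W') (hWclopen.diff hW'clopen)) := by
      rw [← q0', ← hI2]
    rw [hBV, hWq, ← hWV]
    rw [show (QuotientAddGroup.mk fB : C(X, ℤ) ⧸ cobSubgroup φ)
      = QuotientAddGroup.mk f + QuotientAddGroup.mk iD by rw [hp]; abel]
    abel
  constructor
  · exact ⟨g, hg0, hclass.symm⟩
  · intro h
    have h0 : (QuotientAddGroup.mk g : C(X, ℤ) ⧸ cobSubgroup φ) = 0 := by
      rw [← hclass, h, sub_self]
    rw [QuotientAddGroup.eq_zero_iff] at h0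
    have hgz := eq_zero_of_nonneg_mem_cob φ hφadd hφmin hg0 h0
    have hval := congrArg (fun g : C(X,ℤ) => g w') hgz
    have h1 : f w' ≠ 0 := hw'W
    have h2 : indC W hWclopen w' = 1 := by
      simp [indC_apply, Set.indicator_of_mem hw'W]
    have h3 : indC (W \ W') (hWclopen.diff hW'clopen) w' = 1 := by
      simp [indC_apply, Set.indicator_of_mem hw'WW']
    have h4 := indC_nonneg (V \ B) (hVclopen.diff hB) w'
    have h5 := hf0 w'
    simp only [hg, ContinuousMap.add_apply, ContinuousMap.sub_apply,
      ContinuousMap.zero_apply] at hval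
    rw [h2, h3] at hval
    omega
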